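/- Let G have maximum degree Δ ≥ 3 and suppose a polymer model (C(G), w) with q spins satisfies the polymer sampling condition w_γ ≤ e^{−τ|γ|} for all γ ∈ C(G), with constant τ ≥ 5 + 3·log((q−1)Δ). Set r = τ − 2 − log((q−1)Δ). Then for every vertex v, Σ_{γ ∈ C(G), v ∈ γ} w_γ · e^{r|γ|} < 1. -/

import Mathlib

/-!
A polymer containing `v` with `k + 1` vertices is a connected vertex set of that size containing
`v` together with one of at most `(q - 1) ^ (k + 1)` spin assignments. Cutting a connected set at
an edge `vw` into the part of `S \ {v}` reachable from `w` and the rest yields two connected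
sets, so the number of connected sets of size `k + 1` through `v` obeys the Catalan recursion and
is at most `catalan k * Δ ^ k ≤ (4Δ) ^ k`. The sampling condition gives
`w_γ e^{r|γ|} ≤ (e⁻² / ((q - 1)Δ)) ^ |γ|`, so the sum is at most
`Δ⁻¹ ∑ₖ catalan k * e^{-2(k+1)} ≤ e⁻² / (1 - 4e⁻²) = 1 / (e² - 4) < 1`.
-/

open Finset

attribute [local instance] Classical.propDecidable

/-- A polymer in a subset polymer model: a nonempty connected set of vertices together with
an assignment of non-ground-state spins to its vertices. -/
structure Polymer {V : Type} (G : SimpleGraph V) (q : ℕ) (g : V → Fin q) where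
  verts : Finset V
  nonempty : verts.Nonempty
  connected : (G.induce (↑verts : Set V)).Connected
  spin : V → Fin q
  spin_ne : ∀ v ∈ verts, spin v ≠ g v
  spin_ground : ∀ v ∉ verts, spin v = g v

namespace Polymer

variable {V : Type} {G : SimpleGraph V} {q : ℕ} {g : V → Fin q}

/-- The size of a polymer: its number of vertices. -/
def size (γ : Polymer G q g) : ℕ := γ.verts.card

/-- Two polymers are incompatible if their vertex sets are at graph distance at most 1. -/
def Incompat (γ γ' : Polymer G q g) : Prop :=
  ∃ u ∈ γ.verts, ∃ u' ∈ γ'.verts, u = u' ∨ G.Adj u u'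

end Polymer

theorem catalan_le_four_pow (n : ℕ) : catalan n ≤ 4 ^ n :=
  calc catalan n ≤ (n + 1) * catalan n := Nat.le_mul_of_pos_left _ n.succ_pos
    _ = n.centralBinom := succ_mul_catalan_eq_centralBinom n
    _ ≤ 4 ^ n := Nat.centralBinom_le_four_pow n

theorem sum_range_catalan_mul_pow_succ_le {y : ℝ} (hy : 0 ≤ y) (h4y : 4 * y < 1) (N : ℕ) :
    ∑ k ∈ range N, (catalan k : ℝ) * y ^ (k + 1) ≤ y / (1 - 4 * y) :=
  calc ∑ k ∈ range N, (catalan k : ℝ) * y ^ (k + 1)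
      ≤ ∑ k ∈ range N, y * (4 * y) ^ k := by
        refine sum_le_sum fun k _ => ?_
        calc (catalan k : ℝ) * y ^ (k + 1) ≤ 4 ^ k * y ^ (k + 1) := by
              gcongr
              exact_mod_cast catalan_le_four_pow k
          _ = y * (4 * y) ^ k := by ring
    _ = y * ∑ k ∈ Ico 0 N, (4 * y) ^ k := by rw [mul_sum, range_eq_Ico]
    _ ≤ y * ((4 * y) ^ 0 / (1 - 4 * y)) := by
        gcongr
        exact geom_sum_Ico_le_of_lt_one (by positivity) h4y
    _ = y / (1 - 4 * y) := by rw [pow_zero, mul_one_div]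

theorem five_mul_exp_neg_two_lt_one : 5 * Real.exp (-2) < 1 := by
  rw [Real.exp_neg, ← div_eq_mul_inv, div_lt_one (Real.exp_pos 2),
    show (2 : ℝ) = 1 + 1 by norm_num, Real.exp_add]
  nlinarith [Real.exp_one_gt_d9]

namespace SimpleGraph

variable {V : Type} (G : SimpleGraph V)

/-- Reachability through adjacent vertices of `S`; every vertex reaches itself, even outside `S`. -/
def ReachableIn (S : Finset V) : V → V → Prop :=
  Relation.ReflTransGen fun a b => a ∈ S ∧ b ∈ S ∧ G.Adj a b

def IsConnectedSet (S : Finset V) : Prop :=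
  ∀ x ∈ S, ∀ y ∈ S, G.ReachableIn S x y

variable {G} {S : Finset V}

lemma ReachableIn.symm {x y : V} (h : G.ReachableIn S x y) : G.ReachableIn S y x := by
  induction h with
  | refl => exact .refl
  | tail _ hbc ih => exact .head ⟨hbc.2.1, hbc.1, hbc.2.2.symm⟩ ih

lemma ReachableIn.filter {w x : V} (h : G.ReachableIn S w x) :
    G.ReachableIn (S.filter (G.ReachableIn S w)) w x := by
  induction h with
  | refl => exact .refl
  | tail hwb hbc ih =>
    exact ih.tail
      ⟨mem_filter.2 ⟨hbc.1, hwb⟩, mem_filter.2 ⟨hbc.2.1, hwb.tail hbc⟩, hbc.2.2⟩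

lemma isConnectedSet_of_connected_induce (h : (G.induce (S : Set V)).Connected) :
    G.IsConnectedSet S := by
  have hwalk {a b : (S : Set V)} (p : (G.induce (S : Set V)).Walk a b) :
      G.ReachableIn S a b := by
    induction p with
    | nil => exact .refl
    | @cons a b _ hadj _ ih => exact .head ⟨a.2, b.2, hadj⟩ ih
  intro x hx y hy
  exact hwalk (h.preconnected ⟨x, hx⟩ ⟨y, hy⟩).some

variable [DecidableEq V]

lemma ReachableIn.sdiff_of_closed {A : Finset V} {u x : V}
    (hA : ∀ a ∈ S, a ≠ u → ∀ c ∈ A, G.Adj a c → a ∈ A)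
    (h : G.ReachableIn S x u) (hx : x ∈ S \ A) : G.ReachableIn (S \ A) x u := by
  induction h using Relation.ReflTransGen.head_induction_on with
  | refl => exact .refl
  | @head a c hac _ ih =>
    obtain ⟨haS, hcS, hadj⟩ := hac
    rcases eq_or_ne a u with rfl | hau
    · exact .refl
    have hc : c ∈ S \ A :=
      mem_sdiff.2 ⟨hcS, fun hcA => (mem_sdiff.1 hx).2 (hA a haS hau c hcA hadj)⟩
    exact .head ⟨hx, hc, hadj⟩ (ih hc)

/-- `A` is the part of `S \ {u}` reachable from a neighbour `w` of `u`; `B = S \ A` stays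
connected through `u`. -/
lemma IsConnectedSet.exists_split (hS : G.IsConnectedSet S) {u : V} (hu : u ∈ S)
    (hS2 : 2 ≤ #S) : ∃ w, G.Adj u w ∧ ∃ A B : Finset V, G.IsConnectedSet A ∧
      G.IsConnectedSet B ∧ w ∈ A ∧ u ∈ B ∧ Disjoint A B ∧ A ∪ B = S := by
  obtain ⟨y, hy, hyu⟩ := exists_mem_ne hS2 u
  obtain ⟨w, ⟨-, hwS, huw⟩, -⟩ := (hS u hu y hy).cases_head.resolve_left (Ne.symm hyu)
  set T := S.erase u
  set A := T.filter (G.ReachableIn T w)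
  have hAS : A ⊆ S := (filter_subset _ _).trans (erase_subset _ _)
  have huA : u ∉ A := fun h => (mem_erase.1 (mem_filter.1 h).1).1 rfl
  have hA : G.IsConnectedSet A := fun x hx y hy =>
    ((mem_filter.1 hx).2.filter.symm).trans (mem_filter.1 hy).2.filter
  have hclosed : ∀ a ∈ S, a ≠ u → ∀ c ∈ A, G.Adj a c → a ∈ A :=
    fun a haS hau c hc hadj =>
    have haT : a ∈ T := mem_erase.2 ⟨hau, haS⟩
    mem_filter.2 ⟨haT, (mem_filter.1 hc).2.tail ⟨(mem_filter.1 hc).1, haT, hadj.symm⟩⟩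
  have hB_to_u : ∀ x ∈ S \ A, G.ReachableIn (S \ A) x u := fun x hx =>
    (hS x (mem_sdiff.1 hx).1 u hu).sdiff_of_closed hclosed hx
  refine ⟨w, huw, A, S \ A, hA, fun x hx y hy => (hB_to_u x hx).trans (hB_to_u y hy).symm,
    ?_, mem_sdiff.2 ⟨hu, huA⟩, disjoint_sdiff, union_sdiff_of_subset hAS⟩
  exact mem_filter.2 ⟨mem_erase.2 ⟨(G.ne_of_adj huw).symm, hwS⟩, .refl⟩

variable [Fintype V]

variable (G) in
noncomputable def connectedSetsOfCard (v : V) (k : ℕ) : Finset (Finset V) :=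
  univ.filter fun S => v ∈ S ∧ #S = k ∧ G.IsConnectedSet S

/-- Splitting at an edge `vw` gives the Catalan recursion
`N(k + 2) ≤ Δ ∑_{i + j = k} N(i + 1) N(j + 1)`. -/
theorem card_connectedSetsOfCard_succ_le {Δ : ℕ} (hdeg : ∀ v, G.degree v ≤ Δ) (k : ℕ)
    (v : V) : #(G.connectedSetsOfCard v (k + 1)) ≤ catalan k * Δ ^ k := by
  induction k using Nat.strong_induction_on generalizing v with
  | _ k ih =>
  rcases k with _ | n
  · calc #(G.connectedSetsOfCard v 1) ≤ #({{v}} : Finset (Finset V)) := card_le_card ?_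
      _ = catalan 0 * Δ ^ 0 := by simp
    intro S hS
    obtain ⟨hv, hcard, -⟩ := (mem_filter.1 hS).2
    obtain ⟨a, rfl⟩ := card_eq_one.1 hcard
    simp_all
  have hsub : G.connectedSetsOfCard v (n + 2) ⊆ (G.neighborFinset v).biUnion fun w =>
      (antidiagonal n).biUnion fun ij =>
        (G.connectedSetsOfCard w (ij.1 + 1) ×ˢ G.connectedSetsOfCard v (ij.2 + 1)).image
          fun AB => AB.1 ∪ AB.2 := by
    intro S hS
    obtain ⟨hv, hcard, hconn⟩ := (mem_filter.1 hS).2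
    obtain ⟨w, hvw, A, B, hA, hB, hwA, hvB, hAB, rfl⟩ := hconn.exists_split hv (by omega)
    have hAB_card := card_union_of_disjoint hAB
    have hA0 : 0 < #A := card_pos.2 ⟨w, hwA⟩
    have hB0 : 0 < #B := card_pos.2 ⟨v, hvB⟩
    simp only [mem_biUnion, mem_image, mem_product, HasAntidiagonal.mem_antidiagonal,
      mem_neighborFinset, connectedSetsOfCard, mem_filter, mem_univ, true_and]
    exact ⟨w, hvw, (#A - 1, #B - 1), by omega, (A, B),
      ⟨⟨hwA, (by omega : #A = #A - 1 + 1), hA⟩, hvB, (by omega : #B = #B - 1 + 1), hB⟩,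
      rfl⟩
  calc #(G.connectedSetsOfCard v (n + 2))
      ≤ ∑ w ∈ G.neighborFinset v, ∑ ij ∈ antidiagonal n,
          #(G.connectedSetsOfCard w (ij.1 + 1)) * #(G.connectedSetsOfCard v (ij.2 + 1)) :=
        (card_le_card hsub).trans <| card_biUnion_le.trans <| sum_le_sum fun _ _ =>
          card_biUnion_le.trans <| sum_le_sum fun _ _ => card_image_le.trans (card_product _ _).le
    _ ≤ ∑ w ∈ G.neighborFinset v, ∑ ij ∈ antidiagonal n,
          catalan ij.1 * Δ ^ ij.1 * (catalan ij.2 * Δ ^ ij.2) := by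
        gcongr with w _ ij hij
        · exact ih _ (by linarith [HasAntidiagonal.mem_antidiagonal.1 hij]) w
        · exact ih _ (by linarith [HasAntidiagonal.mem_antidiagonal.1 hij]) v
    _ = G.degree v * (catalan (n + 1) * Δ ^ n) := by
        rw [sum_const, card_neighborFinset_eq_degree, smul_eq_mul, catalan_succ', sum_mul]
        congr 1
        refine sum_congr rfl fun ij hij => ?_
        rw [← HasAntidiagonal.mem_antidiagonal.1 hij, pow_add]
        ring
    _ ≤ Δ * (catalan (n + 1) * Δ ^ n) := Nat.mul_le_mul_right _ (hdeg v)
    _ = catalan (n + 1) * Δ ^ (n + 1) := by ring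

end SimpleGraph

namespace Polymer

variable {V : Type} {G : SimpleGraph V} {q : ℕ} {g : V → Fin q}

theorem spin_injective : Function.Injective (spin : Polymer G q g → V → Fin q) := by
  rintro ⟨S, -, -, σ, hne, hground⟩ ⟨S', -, -, σ', hne', hground'⟩ (rfl : σ = σ')
  obtain rfl : S = S' := by
    ext x
    exact ⟨fun hx => by_contra fun hx' => hne x hx (hground' x hx'),
      fun hx => by_contra fun hx' => hne' x hx (hground x hx')⟩
  rfl

variable [Fintype V] [DecidableEq V]

theorem card_filter_verts_eq_le (P : Finset (Polymer G q g)) (S : Finset V) :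
    #(P.filter (·.verts = S)) ≤ (q - 1) ^ #S := by
  let spins : Finset (V → Fin q) :=
    Fintype.piFinset fun x => if x ∈ S then univ.erase (g x) else {g x}
  calc #(P.filter (·.verts = S)) ≤ #spins :=
        card_le_card_of_injOn spin (fun γ hγ => ?_) spin_injective.injOn
    _ = (q - 1) ^ #S := by
        simp [spins, Fintype.card_piFinset, apply_ite card, prod_ite_mem]
  obtain ⟨-, rfl⟩ := mem_filter.1 hγ
  refine Fintype.mem_piFinset.2 fun x => ?_
  split_ifs with hx
  · exact mem_erase.2 ⟨γ.spin_ne x hx, mem_univ _⟩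
  · exact mem_singleton.2 (γ.spin_ground x hx)

variable {Δ : ℕ}

theorem card_filter_mem_size_eq_le (hdeg : ∀ v, G.degree v ≤ Δ) (P : Finset (Polymer G q g))
    (v : V) (k : ℕ) :
    #(P.filter fun γ => v ∈ γ.verts ∧ γ.size = k + 1) ≤
      catalan k * Δ ^ k * (q - 1) ^ (k + 1) := by
  calc #(P.filter fun γ => v ∈ γ.verts ∧ γ.size = k + 1)
      ≤ (q - 1) ^ (k + 1) * #(G.connectedSetsOfCard v (k + 1)) :=
        card_le_mul_card_image_of_maps_to (f := verts) (fun γ hγ => ?_) _ (fun S hS => ?_)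
    _ ≤ (q - 1) ^ (k + 1) * (catalan k * Δ ^ k) :=
        Nat.mul_le_mul_left _ (SimpleGraph.card_connectedSetsOfCard_succ_le hdeg k v)
    _ = catalan k * Δ ^ k * (q - 1) ^ (k + 1) := by ring
  · obtain ⟨-, hv, hsize⟩ := mem_filter.1 hγ
    exact mem_filter.2 ⟨mem_univ _, hv, hsize,
      SimpleGraph.isConnectedSet_of_connected_induce γ.connected⟩
  · obtain ⟨-, -, hcard, -⟩ := mem_filter.1 hS
    rw [filter_filter, ← hcard]
    refine (card_le_card fun γ hγ => ?_).trans (card_filter_verts_eq_le P S)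
    exact mem_filter.2 ⟨(mem_filter.1 hγ).1, (mem_filter.1 hγ).2.2⟩

theorem sum_filter_mem_pow_size_le (hdeg : ∀ v, G.degree v ≤ Δ) (P : Finset (Polymer G q g))
    (v : V) {x : ℝ} (hx : 0 ≤ x) :
    ∑ γ ∈ P.filter (v ∈ ·.verts), x ^ γ.size ≤
      ∑ k ∈ range (Fintype.card V),
        (catalan k * Δ ^ k * (q - 1) ^ (k + 1) : ℕ) * x ^ (k + 1) := by
  have hsize_pos (γ : Polymer G q g) : 0 < γ.size := card_pos.2 γ.nonempty
  have hmaps : ∀ γ ∈ P.filter (v ∈ ·.verts), γ.size - 1 ∈ range (Fintype.card V) :=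
    fun γ _ => mem_range.2 <| by
      have := card_le_univ γ.verts
      have := hsize_pos γ
      unfold size at *
      omega
  rw [← sum_fiberwise_of_maps_to hmaps]
  refine sum_le_sum fun k _ => ?_
  have hfiber : (P.filter (v ∈ ·.verts)).filter (fun γ => γ.size - 1 = k) =
      P.filter fun γ => v ∈ γ.verts ∧ γ.size = k + 1 := by
    rw [filter_filter]
    exact filter_congr fun γ _ => and_congr_right fun _ => by have := hsize_pos γ; omega
  rw [hfiber, sum_congr rfl fun γ hγ => by rw [(mem_filter.1 hγ).2.2], sum_const, nsmul_eq_mul]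
  gcongr
  exact_mod_cast card_filter_mem_size_eq_le hdeg P v k

theorem sum_filter_mem_pow_size_lt_one (hdeg : ∀ v, G.degree v ≤ Δ) (hq : 2 ≤ q)
    (hΔ : 1 ≤ Δ) (P : Finset (Polymer G q g)) (v : V) :
    ∑ γ ∈ P.filter (v ∈ ·.verts),
      (Real.exp (-2) / (((q : ℝ) - 1) * Δ)) ^ γ.size < 1 := by
  have hy := five_mul_exp_neg_two_lt_one
  set y := Real.exp (-2)
  have hq1 : (1 : ℝ) ≤ q - 1 := by
    have : (2 : ℝ) ≤ q := by exact_mod_cast hq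
    linarith
  have hΔ1 : (1 : ℝ) ≤ Δ := by exact_mod_cast hΔ
  calc ∑ γ ∈ P.filter (v ∈ ·.verts), (y / (((q : ℝ) - 1) * Δ)) ^ γ.size
      ≤ ∑ k ∈ range (Fintype.card V),
          ((catalan k * Δ ^ k * (q - 1) ^ (k + 1) : ℕ) : ℝ) *
            (y / (((q : ℝ) - 1) * Δ)) ^ (k + 1) :=
        sum_filter_mem_pow_size_le hdeg P v (by positivity)
    _ = (∑ k ∈ range (Fintype.card V), (catalan k : ℝ) * y ^ (k + 1)) / Δ := by
        rw [sum_div]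
        refine sum_congr rfl fun k _ => ?_
        push_cast [Nat.cast_sub (by omega : 1 ≤ q)]
        rw [div_pow, mul_pow]
        field_simp
        ring
    _ ≤ y / (1 - 4 * y) / Δ := by
        gcongr
        exact sum_range_catalan_mul_pow_succ_le (by positivity) (by linarith [Real.exp_pos (-2)]) _
    _ ≤ y / (1 - 4 * y) := div_le_self (div_nonneg (by positivity) (by linarith)) hΔ1
    _ < 1 := by rw [div_lt_one (by linarith)]; linarith

end Polymer

theorem mul_exp_le_pow_of_le_exp {w τ r c : ℝ} (hc : 0 < c) {n : ℕ}
    (hw : w ≤ Real.exp (-τ * n)) (hr : r = τ - 2 - Real.log c) :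
    w * Real.exp (r * n) ≤ (Real.exp (-2) / c) ^ n :=
  calc w * Real.exp (r * n) ≤ Real.exp (-τ * n) * Real.exp (r * n) := by gcongr
    _ = Real.exp (-2 - Real.log c) ^ n := by
        rw [← Real.exp_add, ← Real.exp_nat_mul, hr]
        ring_nf
    _ = (Real.exp (-2) / c) ^ n := by rw [Real.exp_sub, Real.exp_log hc]

theorem stmt_5_general {V : Type} [Fintype V] [DecidableEq V] (G : SimpleGraph V) (q Δ : ℕ)
    (hq : 2 ≤ q) (hΔ : 3 ≤ Δ) (hdeg : ∀ v : V, G.degree v ≤ Δ)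
    (g : V → Fin q) (C : Finset (Polymer G q g)) (w : Polymer G q g → ℝ)
    (τ : ℝ)
    (hsamp : ∀ γ ∈ C, w γ ≤ Real.exp (-τ * γ.size))
    (r : ℝ) (hr : r = τ - 2 - Real.log (((q : ℝ) - 1) * Δ)) :
    ∀ v : V, ∑ γ ∈ C.filter (fun γ => v ∈ γ.verts),
        w γ * Real.exp (r * γ.size) < 1 := by
  intro v
  have hc : (0 : ℝ) < ((q : ℝ) - 1) * Δ := by
    have : (2 : ℝ) ≤ q := by exact_mod_cast hq
    have : (3 : ℝ) ≤ Δ := by exact_mod_cast hΔ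
    exact mul_pos (by linarith) (by linarith)
  calc ∑ γ ∈ C.filter (fun γ => v ∈ γ.verts), w γ * Real.exp (r * γ.size)
      ≤ ∑ γ ∈ C.filter (fun γ => v ∈ γ.verts),
          (Real.exp (-2) / (((q : ℝ) - 1) * Δ)) ^ γ.size :=
        sum_le_sum fun γ hγ => mul_exp_le_pow_of_le_exp hc (hsamp γ (mem_filter.1 hγ).1) hr
    _ < 1 := Polymer.sum_filter_mem_pow_size_lt_one hdeg hq (by omega) C v

/-- under the polymer sampling condition with constant
`τ ≥ 5 + 3 log((q-1)Δ)`, setting `r = τ - 2 - log((q-1)Δ)`, for every vertex `v`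
the sum `∑_{γ ∋ v} w_γ e^{r|γ|}` is strictly less than `1`. -/
theorem stmt_5 {V : Type} [Fintype V] [DecidableEq V] (G : SimpleGraph V) (q Δ : ℕ)
    (hq : 2 ≤ q) (hΔ : 3 ≤ Δ) (hdeg : ∀ v : V, G.degree v ≤ Δ)
    (g : V → Fin q) (C : Finset (Polymer G q g)) (w : Polymer G q g → ℝ)
    (hw : ∀ γ ∈ C, 0 ≤ w γ) (τ : ℝ)
    (hτ : 5 + 3 * Real.log (((q : ℝ) - 1) * Δ) ≤ τ)
    (hsamp : ∀ γ ∈ C, w γ ≤ Real.exp (-τ * γ.size))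
    (r : ℝ) (hr : r = τ - 2 - Real.log (((q : ℝ) - 1) * Δ)) :
    ∀ v : V, ∑ γ ∈ C.filter (fun γ => v ∈ γ.verts),
        w γ * Real.exp (r * γ.size) < 1 :=
  stmt_5_general G q Δ hq hΔ hdeg g C w τ hsamp r hr
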